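/- arXiv:2407.20217 — 3 statements merged into one kernel-verified Lean document; each statement's English description precedes it below -/
import Mathlib

section
/- If G ∈ G_{n,n+k} with n ≥ 2 and k ≥ 0 has a bridge, then there exists a graph G′ ∈ G_{n,n+k} such that d_i(G′) < d_i(G) for every i ∈ {1, …, k+1}. Consequently, for every p ∈ (0,1), any p-optimal (n,n+k)-graph is bridgeless. -/
open Classical Finset

noncomputable section

/-- A finite multigraph: edges carry two (possibly equal) endpoints. -/
structure Multigraph where
  V : Type
  E : Type
  [fintV : Fintype V]
  [fintE : Fintype E]
  src : E → V
  tgt : E → V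

attribute [instance] Multigraph.fintV Multigraph.fintE

namespace Multigraph

variable (G : Multigraph)

/-- Number of vertices. -/
def nV : ℕ := Fintype.card G.V

/-- Number of edges (with multiplicity). -/
def nE : ℕ := Fintype.card G.E

/-- One step along an edge belonging to the edge set `S`. -/
def stepOn (S : Finset G.E) (u v : G.V) : Prop :=
  ∃ e ∈ S, (G.src e = u ∧ G.tgt e = v) ∨ (G.src e = v ∧ G.tgt e = u)

/-- The spanning subgraph with edge set `S` is connected. -/
def ConnOn (S : Finset G.E) : Prop :=
  ∀ u v : G.V, Relation.ReflTransGen (G.stepOn S) u v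

/-- `G` is connected. -/
def Connected : Prop := G.ConnOn Finset.univ

/-- The edge set `F` disconnects `G` (i.e. is a disconnection). -/
def Disconnects (F : Finset G.E) : Prop := ¬ G.ConnOn (Finset.univ \ F)

/-- `d i G`: the number of `i`-disconnections of `G`. -/
def d (i : ℕ) : ℕ :=
  ((Finset.univ : Finset (Finset G.E)).filter fun F => F.card = i ∧ G.Disconnects F).card

/-- The all-terminal reliability `R(G,p)`: each edge is independently retained with
probability `p`; this is the probability that the retained spanning subgraph is connected. -/
def rel (p : ℝ) : ℝ :=
  ∑ S : Finset G.E, if G.ConnOn S then p ^ S.card * (1 - p) ^ (G.nE - S.card) else 0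

/-- `e` is a bridge. -/
def IsBridge (e : G.E) : Prop := G.Disconnects {e}

def Bridgeless : Prop := ∀ e : G.E, ¬ G.IsBridge e

/-- The number of spanning trees of `G` (connected spanning subgraphs with `nV - 1` edges). -/
def treeCount : ℕ :=
  ((Finset.univ : Finset (Finset G.E)).filter fun S => S.card + 1 = G.nV ∧ G.ConnOn S).card

/-- The edge-connectivity: the least size of a disconnecting set of edges. -/
def edgeConnectivity : ℕ :=
  sInf {i : ℕ | ∃ F : Finset G.E, F.card = i ∧ G.Disconnects F}

/-- Degree of a vertex (a loop counts twice). -/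
def deg (v : G.V) : ℕ :=
  (Finset.univ.filter fun e => G.src e = v).card +
    (Finset.univ.filter fun e => G.tgt e = v).card

/-- The edges crossing the vertex set `A`. -/
def cutEdges (A : Finset G.V) : Finset G.E :=
  Finset.univ.filter fun e =>
    (G.src e ∈ A ∧ G.tgt e ∉ A) ∨ (G.src e ∉ A ∧ G.tgt e ∈ A)

/-- `F` is a cut: the set of edges crossing a nontrivial bipartition of the vertices. -/
def IsCut (F : Finset G.E) : Prop :=
  ∃ A : Finset G.V, A.Nonempty ∧ A ≠ Finset.univ ∧ F = G.cutEdges A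

/-- `F` is a bond: a minimal cut. -/
def IsBond (F : Finset G.E) : Prop :=
  G.IsCut F ∧ ∀ F' ⊆ F, G.IsCut F' → F' = F

/-- Number of `s`-bonds of `G`. -/
def bondCount (s : ℕ) : ℕ :=
  ((Finset.univ : Finset (Finset G.E)).filter fun F => F.card = s ∧ G.IsBond F).card

/-- Adjacency of vertices. -/
def Adj (u v : G.V) : Prop :=
  ∃ e : G.E, (G.src e = u ∧ G.tgt e = v) ∨ (G.src e = v ∧ G.tgt e = u)

/-- `G` is simple: no loops and no parallel edges. -/
def IsSimple : Prop :=
  (∀ e : G.E, G.src e ≠ G.tgt e) ∧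
    ∀ e f : G.E,
      ((G.src e = G.src f ∧ G.tgt e = G.tgt f) ∨ (G.src e = G.tgt f ∧ G.tgt e = G.src f)) →
        e = f

end Multigraph

/-- `G ∈ 𝒢_{n,m}`: connected with `n` vertices and `m` edges. -/
def memG (G : Multigraph) (n m : ℕ) : Prop :=
  G.nV = n ∧ G.nE = m ∧ G.Connected

/-- Isomorphism of multigraphs. -/
structure MGIso (G H : Multigraph) where
  vMap : G.V ≃ H.V
  eMap : G.E ≃ H.E
  ends_eq : ∀ e : G.E,
    (H.src (eMap e) = vMap (G.src e) ∧ H.tgt (eMap e) = vMap (G.tgt e)) ∨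
    (H.src (eMap e) = vMap (G.tgt e) ∧ H.tgt (eMap e) = vMap (G.src e))

def IsIso (G H : Multigraph) : Prop := Nonempty (MGIso G H)

/-- `G` is `p`-optimal in `𝒢_{n,m}`. -/
def pOptimal (G : Multigraph) (n m : ℕ) (p : ℝ) : Prop :=
  memG G n m ∧ ∀ H : Multigraph, memG H n m → H.rel p ≤ G.rel p

/-- `G` is uniquely optimal in `𝒢_{n,m}`: strictly more reliable than every
non-isomorphic member, for every `p ∈ (0,1)`. -/
def UniquelyOptimal (G : Multigraph) (n m : ℕ) : Prop :=
  memG G n m ∧ ∀ H : Multigraph, memG H n m → ¬ IsIso G H →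
    ∀ p : ℝ, 0 < p → p < 1 → H.rel p < G.rel p

noncomputable instance quotFintype {α : Type} [Fintype α] {r : α → α → Prop} :
    Fintype (Quot r) :=
  letI := Classical.decEq (Quot r)
  Fintype.ofSurjective (Quot.mk r) fun q => Quot.exists_rep q

/-- Identification of the endpoints of zero-weight edges. -/
def zeroRel (D : Multigraph) (w : D.E → ℕ) : D.V → D.V → Prop :=
  fun u v => ∃ e : D.E, w e = 0 ∧ D.src e = u ∧ D.tgt e = v

/-- The `j`-th node along the chain replacing the edge `e` (whose chain has `w e` edges). -/
def chainNode (D : Multigraph) (w : D.E → ℕ) (e : D.E) (j : ℕ) :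
    Quot (zeroRel D w) ⊕ (Σ f : D.E, Fin (w f - 1)) :=
  if h : 0 < j ∧ j < w e then Sum.inr ⟨e, ⟨j - 1, by omega⟩⟩
  else if j = 0 then Sum.inl (Quot.mk _ (D.src e))
  else Sum.inl (Quot.mk _ (D.tgt e))

/-- The weak subdivision of `D` determined by the chain lengths `w`: each edge `e` is
replaced by a chain with `w e` edges; zero-weight edges are contracted. -/
def subdivide (D : Multigraph) (w : D.E → ℕ) : Multigraph where
  V := Quot (zeroRel D w) ⊕ (Σ f : D.E, Fin (w f - 1))
  E := Σ f : D.E, Fin (w f)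
  src f := chainNode D w f.1 f.2.val
  tgt f := chainNode D w f.1 (f.2.val + 1)

/-- The zero-weight edges contain no cycle (no "zero cycle"): they form a forest. -/
def ZeroAcyclic (D : Multigraph) (w : D.E → ℕ) : Prop :=
  Fintype.card (Quot (zeroRel D w)) +
      (Finset.univ.filter fun e : D.E => w e = 0).card = Fintype.card D.V

/-- `G` is a weak subdivision of `D` with chain lengths `w`. -/
def IsWeakSubdivision (G D : Multigraph) (w : D.E → ℕ) : Prop :=
  ZeroAcyclic D w ∧ IsIso G (subdivide D w)

/-- `D` is a weak distillation of `G`. -/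
def IsWeakDistillation (D G : Multigraph) : Prop :=
  ∃ w : D.E → ℕ, IsWeakSubdivision G D w

/-- The chain lengths differ pairwise by at most one. -/
def BalancedWeights {E : Type} (w : E → ℕ) : Prop := ∀ e f : E, w e ≤ w f + 1

/-- `D ∈ 𝒟_k`: connected, cubic, 3-edge-connected, of exceedance `k`. -/
def memDk (k : ℕ) (D : Multigraph) : Prop :=
  D.Connected ∧ (∀ v : D.V, D.deg v = 3) ∧
    (∀ F : Finset D.E, D.Disconnects F → 3 ≤ F.card) ∧ D.nE = D.nV + k

/-- Identification of the two endpoints of the edge `e`. -/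
def contractRel (G : Multigraph) (e : G.E) : G.V → G.V → Prop :=
  fun u v => u = G.src e ∧ v = G.tgt e

/-- Contraction of the edge `e`. -/
def Multigraph.contract (G : Multigraph) (e : G.E) : Multigraph :=
  letI := Classical.decEq G.E
  { V := Quot (contractRel G e)
    E := {f : G.E // f ≠ e}
    src := fun f => Quot.mk _ (G.src f.1)
    tgt := fun f => Quot.mk _ (G.tgt f.1) }

/-- `G'` is obtained from `G` by shifting an edge: in an intermediate graph `H`
(the expansion of `G` at a vertex by the new edge `e'`), the edges `e, e'` form a
2-bond; contracting `e'` gives back `G`, while contracting `e` gives `G'`. -/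
def IsShiftOf (G G' : Multigraph) : Prop :=
  ∃ (H : Multigraph) (e e' : H.E), e ≠ e' ∧
    H.src e ≠ H.tgt e ∧ H.src e' ≠ H.tgt e' ∧
    H.IsBond {e, e'} ∧
    IsIso (H.contract e') G ∧ IsIso (H.contract e) G'

/-- Equivalence of graphs: repeated edge shifting. -/
def EquivalentGraphs (G G' : Multigraph) : Prop :=
  Relation.ReflTransGen IsShiftOf G G'

/-- `G'` is obtained from `G` by moving the (non-loop) edge `e`: contracting `e` and
expanding a new edge, identified with `e` via `φ`, at an arbitrary vertex.
Equivalently, `G/e` and `G'/φ e` agree, compatibly with the edge identification `φ`. -/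
def MovedEdge (G G' : Multigraph) (φ : G.E ≃ G'.E) (e : G.E) : Prop :=
  G.src e ≠ G.tgt e ∧ G'.src (φ e) ≠ G'.tgt (φ e) ∧
  ∃ ψ : Quot (contractRel G e) ≃ Quot (contractRel G' (φ e)),
    ∀ f : G.E, f ≠ e →
      ((ψ (Quot.mk _ (G.src f)) = Quot.mk _ (G'.src (φ f)) ∧
        ψ (Quot.mk _ (G.tgt f)) = Quot.mk _ (G'.tgt (φ f))) ∨
       (ψ (Quot.mk _ (G.src f)) = Quot.mk _ (G'.tgt (φ f)) ∧
        ψ (Quot.mk _ (G.tgt f)) = Quot.mk _ (G'.src (φ f))))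

/-- Move one edge from the chain `a` to the chain `b`. -/
def moveWeight {E : Type} (w : E → ℕ) (a b : E) : E → ℕ :=
  fun g => if g = b then w b + 1 else if g = a then w a - 1 else w g

/-- The chains of maximal length. -/
def maxChains (D : Multigraph) (w : D.E → ℕ) : Finset D.E :=
  Finset.univ.filter fun e => ∀ f : D.E, w f ≤ w e

/-- The chains of minimal length. -/
def minChains (D : Multigraph) (w : D.E → ℕ) : Finset D.E :=
  Finset.univ.filter fun e => ∀ f : D.E, w e ≤ w f

/-- Degree of `v` within the edge set `S`. -/
def degIn (D : Multigraph) (S : Finset D.E) (v : D.V) : ℕ :=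
  (S.filter fun e => D.src e = v).card + (S.filter fun e => D.tgt e = v).card

/-- `S` is a matching (pairwise non-adjacent edges). -/
def IsMatchingIn (D : Multigraph) (S : Finset D.E) : Prop := ∀ v : D.V, degIn D S v ≤ 1

/-- `S` is a path with three edges. -/
def IsPath3In (D : Multigraph) (S : Finset D.E) : Prop :=
  S.card = 3 ∧ (∀ v : D.V, degIn D S v ≤ 2) ∧
    (Finset.univ.filter fun v : D.V => degIn D S v = 1).card = 2

/-- `S` is the disjoint union of a path with three edges and a single edge. -/
def IsPath3PlusEdgeIn (D : Multigraph) (S : Finset D.E) : Prop :=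
  S.card = 4 ∧ (∀ v : D.V, degIn D S v ≤ 2) ∧
    (Finset.univ.filter fun v : D.V => degIn D S v = 1).card = 4 ∧
    ∃ e ∈ S, degIn D S (D.src e) = 2 ∧ degIn D S (D.tgt e) = 2

/-- `S` is the disjoint union of two paths with two edges each. -/
def IsTwoPlusTwoIn (D : Multigraph) (S : Finset D.E) : Prop :=
  S.card = 4 ∧ (∀ v : D.V, degIn D S v ≤ 2) ∧
    (Finset.univ.filter fun v : D.V => degIn D S v = 1).card = 4 ∧
    ∀ e ∈ S, degIn D S (D.src e) = 1 ∨ degIn D S (D.tgt e) = 1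

/-- Two edges sharing a vertex. -/
def AdjEdges (D : Multigraph) (a b : D.E) : Prop :=
  ∃ v : D.V, (D.src a = v ∨ D.tgt a = v) ∧ (D.src b = v ∨ D.tgt b = v)

/-- The number of incidences of edges of weight `c` at the vertex `u`. -/
def incCount (D : Multigraph) (w : D.E → ℕ) (u : D.V) (c : ℕ) : ℕ :=
  (Finset.univ.filter fun e : D.E => D.src e = u ∧ w e = c).card +
    (Finset.univ.filter fun e : D.E => D.tgt e = u ∧ w e = c).card

/-- The `π^v`-value of the vertex `u`: the number of incident edges of weight `q + 1`
minus the number of incident edges of weight `q - 1`. -/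
def piV (D : Multigraph) (w : D.E → ℕ) (q : ℕ) (u : D.V) : ℤ :=
  (incCount D w u (q + 1) : ℤ) -
    (if q = 0 then 0 else (incCount D w u (q - 1) : ℤ))

/-- The `π^v`-values are balanced: pairwise differences at most one. -/
def BalancedPiV (D : Multigraph) (w : D.E → ℕ) (q : ℕ) : Prop :=
  ∀ u v : D.V, piV D w q u ≤ piV D w q v + 1

/-- The standard weight `q`, where `m = 3kq + r` with `-3k/2 < r ≤ 3k/2`. -/
def stdWeight (m k : ℕ) : ℕ := (2 * m + 3 * k - 1) / (6 * k)

/-- `w` is a balanced weighting of `D` of total size `m` (the implied weak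
subdivision is the generic member of `ℬ_m(D)`). -/
def IsBalancedWeighting (D : Multigraph) (w : D.E → ℕ) (m : ℕ) : Prop :=
  (∑ e : D.E, w e) = m ∧ BalancedWeights w ∧ ZeroAcyclic D w

/-- Every 3-bond of `D` is trivial (consists of the three edges at a single vertex). -/
def OnlyTrivialThreeBonds (D : Multigraph) : Prop :=
  ∀ F : Finset D.E, D.IsBond F → F.card = 3 →
    ∃ u : D.V, F = Finset.univ.filter fun e => D.src e = u ∨ D.tgt e = u

/-- The 3-dipole: two vertices joined by three parallel edges. -/
def dipole3 : Multigraph where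
  V := Fin 2
  E := Fin 3
  src _ := 0
  tgt _ := 1

/-- The complete graph `K₄`. -/
def K4 : Multigraph where
  V := Fin 4
  E := {p : Fin 4 × Fin 4 // p.1 < p.2}
  src p := p.1.1
  tgt p := p.1.2

/-- The complete bipartite graph `K_{3,3}`. -/
def K33 : Multigraph where
  V := Fin 3 ⊕ Fin 3
  E := Fin 3 × Fin 3
  src p := Sum.inl p.1
  tgt p := Sum.inr p.2

/-- The triangular prism `Π₃`; the edges `Sum.inr i` are the rungs. -/
def prism : Multigraph where
  V := Fin 3 × Bool
  E := (Fin 3 × Bool) ⊕ Fin 3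
  src := fun e => match e with
    | Sum.inl (i, b) => (i, b)
    | Sum.inr i => (i, false)
  tgt := fun e => match e with
    | Sum.inl (i, b) => (i + 1, b)
    | Sum.inr i => (i, true)

/-- The Wagner graph (the 4-Möbius ladder): the edges `Sum.inl i` are the rails
(the 8-cycle) and the edges `Sum.inr j` are the rungs. -/
def wagner : Multigraph where
  V := Fin 8
  E := Fin 8 ⊕ Fin 4
  src := fun e => match e with
    | Sum.inl i => i
    | Sum.inr j => ⟨j.val, by omega⟩
  tgt := fun e => match e with
    | Sum.inl i => i + 1
    | Sum.inr j => ⟨j.val + 4, by omega⟩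

/-- The Petersen graph. -/
def petersen : Multigraph where
  V := Fin 5 × Bool
  E := Fin 5 ⊕ Fin 5 ⊕ Fin 5
  src := fun e => match e with
    | Sum.inl i => (i, false)
    | Sum.inr (Sum.inl i) => (i, false)
    | Sum.inr (Sum.inr i) => (i, true)
  tgt := fun e => match e with
    | Sum.inl i => (i + 1, false)
    | Sum.inr (Sum.inl i) => (i, true)
    | Sum.inr (Sum.inr i) => (i + 2, true)

/-! If `e` is a bridge of `G` and `f` is not (there are at least as many edges as vertices,
so some edge lies on a cycle), contract `e` and use its freed endpoint to subdivide `f`.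
The resulting graph has the same vertices and edges; every edge set keeping `G` connected
contains `e` and keeps the new graph connected, whereas the complement of `e`, and each of its
subsets containing a spanning tree, keeps only the new graph connected. So every `d_i` with
`1 ≤ i ≤ k + 1` strictly drops and the reliability strictly grows. -/

namespace Multigraph

open Relation

variable {G : Multigraph} {S T : Finset G.E} {e f : G.E}

instance stepOn_symm (S : Finset G.E) : Std.Symm (G.stepOn S) :=
  ⟨fun _ _ ⟨g, hg, h⟩ => ⟨g, hg, h.symm⟩⟩

lemma reach_symm {u v : G.V} (h : ReflTransGen (G.stepOn S) u v) :
    ReflTransGen (G.stepOn S) v u :=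
  Std.Symm.symm _ _ h

lemma stepOn_mono (h : S ⊆ T) : G.stepOn S ≤ G.stepOn T :=
  fun _ _ ⟨g, hg, hends⟩ => ⟨g, h hg, hends⟩

lemma ConnOn.mono (hc : G.ConnOn S) (h : S ⊆ T) : G.ConnOn T :=
  fun u v => ReflTransGen.mono (stepOn_mono h) _ _ (hc u v)

lemma stepOn_le_of_forall_mem {P : G.V → G.V → Prop} [Std.Symm P]
    (h : ∀ g ∈ S, P (G.src g) (G.tgt g)) : G.stepOn S ≤ P := by
  rintro _ _ ⟨g, hg, ⟨rfl, rfl⟩ | ⟨rfl, rfl⟩⟩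
  exacts [h g hg, Std.Symm.symm _ _ (h g hg)]

lemma reach_le_of_forall_mem (h : ∀ g ∈ S, ReflTransGen (G.stepOn T) (G.src g) (G.tgt g)) :
    ReflTransGen (G.stepOn S) ≤ ReflTransGen (G.stepOn T) :=
  reflTransGen_closed (stepOn_le_of_forall_mem h)

def numComponents (G : Multigraph) (S : Finset G.E) : ℕ :=
  Fintype.card (Quot (G.stepOn S))

lemma mk_eq_mk_iff_reach {u v : G.V} :
    Quot.mk (G.stepOn S) u = Quot.mk _ v ↔ ReflTransGen (G.stepOn S) u v := by
  rw [Quot.eq, EqvGen.eqvGen_eq_reflTransGen]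

lemma numComponents_le_card_V : G.numComponents S ≤ Fintype.card G.V :=
  Fintype.card_le_of_surjective _ Quot.mk_surjective

lemma numComponents_anti (h : S ⊆ T) : G.numComponents T ≤ G.numComponents S :=
  Fintype.card_le_of_surjective (Quot.map id (stepOn_mono h))
    (Quot.ind fun v => ⟨Quot.mk _ v, rfl⟩)

lemma numComponents_insert_lt {g : G.E} (h : ¬ ReflTransGen (G.stepOn S) (G.src g) (G.tgt g)) :
    G.numComponents (insert g S) < G.numComponents S := by
  refine Fintype.card_lt_of_surjective_not_injective
    (Quot.map id (stepOn_mono (subset_insert g S))) (Quot.ind fun v => ⟨Quot.mk _ v, rfl⟩)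
    fun hinj => h (mk_eq_mk_iff_reach.1 (@hinj (Quot.mk _ _) (Quot.mk _ _) ?_))
  exact Quot.sound ⟨g, mem_insert_self g S, Or.inl ⟨rfl, rfl⟩⟩

lemma ConnOn.numComponents_eq_one [Nonempty G.V] (hc : G.ConnOn S) : G.numComponents S = 1 := by
  obtain ⟨v⟩ := ‹Nonempty G.V›
  exact Fintype.card_eq_one_iff.2
    ⟨Quot.mk _ v, Quot.ind fun u => mk_eq_mk_iff_reach.2 (hc u v)⟩

/-- Kruskal: grow `T` by the edges of `S` that join two of its components. -/
lemma exists_spanning_forest (S : Finset G.E) :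
    ∃ T ⊆ S, T.card + G.numComponents S ≤ Fintype.card G.V ∧
      ∀ g ∈ S, ReflTransGen (G.stepOn T) (G.src g) (G.tgt g) := by
  induction S using Finset.induction_on with
  | empty => exact ⟨∅, subset_refl _, by simpa using numComponents_le_card_V, by simp⟩
  | @insert g S _ ih =>
    obtain ⟨T, hTS, hcard, hspan⟩ := ih
    by_cases hg : ReflTransGen (G.stepOn S) (G.src g) (G.tgt g)
    · refine ⟨T, hTS.trans (subset_insert g S), ?_, ?_⟩
      · have := numComponents_anti (G := G) (subset_insert g S)
        omega
      · simpa only [mem_insert, forall_eq_or_imp] using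
          ⟨reach_le_of_forall_mem hspan _ _ hg, hspan⟩
    · refine ⟨insert g T, insert_subset_insert g hTS, ?_, ?_⟩
      · have := card_insert_le g T
        have := numComponents_insert_lt hg
        omega
      · simp only [mem_insert, forall_eq_or_imp]
        exact ⟨.single ⟨g, mem_insert_self g T, Or.inl ⟨rfl, rfl⟩⟩,
          fun g' hg' => ReflTransGen.mono (stepOn_mono (subset_insert g T)) _ _ (hspan g' hg')⟩

lemma ConnOn.exists_subset_card_eq [Nonempty G.V] (hc : G.ConnOn S) {j : ℕ}
    (hVj : Fintype.card G.V ≤ j + 1) (hjS : j ≤ S.card) :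
    ∃ T ⊆ S, T.card = j ∧ G.ConnOn T := by
  obtain ⟨F, hFS, hcard, hspan⟩ := exists_spanning_forest S
  rw [hc.numComponents_eq_one] at hcard
  obtain ⟨T, hFT, hTS, hTcard⟩ := exists_subsuperset_card_eq hFS (by omega) hjS
  exact ⟨T, hTS, hTcard, fun u v =>
    ReflTransGen.mono (stepOn_mono hFT) _ _ (reach_le_of_forall_mem hspan _ _ (hc u v))⟩

lemma ConnOn.not_isBridge (hc : G.ConnOn S) (he : e ∉ S) : ¬ G.IsBridge e :=
  fun hb => hb (hc.mono fun g hg => by simpa using ne_of_mem_of_not_mem hg he)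

lemma IsBridge.mem_of_connOn (hb : G.IsBridge e) (hc : G.ConnOn S) : e ∈ S :=
  by_contra fun he => hc.not_isBridge he hb

lemma IsBridge.src_ne_tgt (hc : G.Connected) (hb : G.IsBridge e) : G.src e ≠ G.tgt e := by
  refine fun hloop => hb fun u v => reach_le_of_forall_mem (fun g _ => ?_) _ _ (hc u v)
  by_cases hg : g = e
  · subst hg
    exact hloop ▸ .refl
  · exact .single ⟨g, by simpa using hg, Or.inl ⟨rfl, rfl⟩⟩

lemma Connected.exists_not_isBridge [Nonempty G.V] (hc : G.Connected)
    (hVE : G.nV ≤ G.nE) : ∃ f : G.E, ¬ G.IsBridge f := by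
  have hVE' : Fintype.card G.V ≤ Fintype.card G.E := hVE
  have hV := Fintype.card_pos (α := G.V)
  obtain ⟨T, -, hTcard, hT⟩ := hc.exists_subset_card_eq (j := Fintype.card G.E - 1)
    (by omega) (by simp)
  obtain ⟨f, -, hfT⟩ := exists_mem_notMem_of_card_lt_card (s := T) (t := univ)
    (by rw [card_univ]; omega)
  exact ⟨f, hT.not_isBridge hfT⟩

def collapse (G : Multigraph) (e : G.E) (v : G.V) : G.V :=
  if v = G.tgt e then G.src e else v

/-- Contract `e` by merging `tgt e` into `src e`, and reuse the freed vertex `tgt e` to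
subdivide `f` into the path formed by `e` and `f`. -/
abbrev bridgeShift (G : Multigraph) (e f : G.E) : Multigraph where
  V := G.V
  E := G.E
  src g := if g = e then G.collapse e (G.src f) else if g = f then G.tgt e
    else G.collapse e (G.src g)
  tgt g := if g = e then G.tgt e else if g = f then G.collapse e (G.tgt f)
    else G.collapse e (G.tgt g)

section bridgeShift

variable {S' : Finset G.E}

lemma collapse_src_eq_collapse_tgt (hne : G.src e ≠ G.tgt e) :
    G.collapse e (G.src e) = G.collapse e (G.tgt e) := by
  simp [collapse, hne]

lemma reach_bridgeShift_collapse (hne : G.src e ≠ G.tgt e) (hfe : f ≠ e)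
    (hS : S.erase e ⊆ S') (hf : f ∈ S → e ∈ S' ∧ f ∈ S') {u v : G.V}
    (h : ReflTransGen (G.stepOn S) u v) :
    ReflTransGen ((G.bridgeShift e f).stepOn S') (G.collapse e u) (G.collapse e v) := by
  refine ReflTransGen.lift' (G.collapse e) (stepOn_le_of_forall_mem fun g hg => ?_) _ _ h
  by_cases hge : g = e
  · subst hge
    simpa only [Function.onFun, collapse_src_eq_collapse_tgt hne] using ReflTransGen.refl
  by_cases hgf : g = f
  · subst hgf
    obtain ⟨he', hf'⟩ := hf hg
    refine ReflTransGen.head (b := G.tgt e) ⟨e, he', Or.inl ⟨?_, ?_⟩⟩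
      (.single ⟨g, hf', Or.inl ⟨?_, ?_⟩⟩) <;> simp [hfe]
  · exact .single ⟨g, hS (mem_erase.2 ⟨hge, hg⟩), Or.inl ⟨by simp [hge, hgf],
      by simp [hge, hgf]⟩⟩

lemma ConnOn.bridgeShift (hne : G.src e ≠ G.tgt e) (hfe : f ≠ e) (hc : G.ConnOn S)
    (hS : S.erase e ⊆ S') (hf : f ∈ S → e ∈ S' ∧ f ∈ S') (hlink : e ∈ S' ∨ f ∈ S') :
    (G.bridgeShift e f).ConnOn S' := by
  have hreach : ∀ u v : G.V,
      ReflTransGen ((G.bridgeShift e f).stepOn S') (G.collapse e u) (G.collapse e v) :=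
    fun u v => reach_bridgeShift_collapse hne hfe hS hf (hc u v)
  -- only `tgt e` is moved by `collapse`, and `e` or `f` joins it to the rest
  have hcollapse : ∀ w : G.V, ReflTransGen ((G.bridgeShift e f).stepOn S') w (G.collapse e w) := by
    intro w
    by_cases hw : w = G.tgt e
    · subst hw
      rcases hlink with he | hf'
      · exact .head (b := G.collapse e (G.src f)) ⟨e, he, Or.inr ⟨by simp, by simp⟩⟩
          (hreach _ _)
      · exact .head (b := G.collapse e (G.tgt f)) ⟨f, hf', Or.inl ⟨by simp [hfe], by simp [hfe]⟩⟩
          (hreach _ _)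
    · simpa [collapse, hw] using ReflTransGen.refl
  exact fun u v => ((hcollapse u).trans (hreach u v)).trans (reach_symm (hcollapse v))

end bridgeShift

namespace IsBridge

lemma connOn_bridgeShift (hb : G.IsBridge e) (hfe : f ≠ e) (hc : G.ConnOn S) :
    (G.bridgeShift e f).ConnOn S :=
  hc.bridgeShift (hb.src_ne_tgt (hc.mono (subset_univ S))) hfe (erase_subset e S)
    (fun hf => ⟨hb.mem_of_connOn hc, hf⟩) (Or.inl (hb.mem_of_connOn hc))

lemma ne_of_not_isBridge (hb : G.IsBridge e) (hf : ¬ G.IsBridge f) : f ≠ e := by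
  rintro rfl
  exact hf hb

-- `collapse` merges the two sides of the bridge `e`.
lemma connOn_bridgeShift_compl (hc : G.Connected) (hb : G.IsBridge e) (hf : ¬ G.IsBridge f) :
    (G.bridgeShift e f).ConnOn (univ \ {e}) := by
  have hfe := hb.ne_of_not_isBridge hf
  refine (not_not.1 hf).bridgeShift (hb.src_ne_tgt hc) hfe (fun g hg => ?_) (by simp) ?_
  · simp only [mem_erase, mem_sdiff, mem_univ, mem_singleton, true_and] at hg ⊢
    exact hg.1
  · simpa using hfe

lemma memG_bridgeShift (hb : G.IsBridge e) (hfe : f ≠ e) {n m : ℕ} (hG : memG G n m) :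
    memG (G.bridgeShift e f) n m :=
  ⟨hG.1, hG.2.1, hb.connOn_bridgeShift hfe hG.2.2⟩

lemma d_bridgeShift_lt (hc : G.Connected) (hb : G.IsBridge e) (hf : ¬ G.IsBridge f) {i : ℕ}
    (hi : 1 ≤ i) (hiV : G.nV + i ≤ G.nE + 1) : (G.bridgeShift e f).d i < G.d i := by
  have : Nonempty G.V := ⟨G.src e⟩
  have hV : 0 < G.nV := Fintype.card_pos
  have hcardE : (univ \ {e} : Finset G.E).card = G.nE - 1 := by
    rw [card_univ_sdiff, card_singleton]
    rfl
  obtain ⟨T, hTe, hTcard, hT⟩ : ∃ T : Finset G.E, T ⊆ univ \ {e} ∧ T.card = G.nE - i ∧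
      (G.bridgeShift e f).ConnOn T := (hb.connOn_bridgeShift_compl hc hf).exists_subset_card_eq
    (j := G.nE - i) (by simp only [nV] at hiV hV ⊢; omega) (by omega)
  have hcompl : (univ \ T).card = i := by
    rw [card_univ_sdiff, hTcard]
    simp only [nE] at hiV hV ⊢
    omega
  have hsub : (univ.filter fun F => F.card = i ∧ (G.bridgeShift e f).Disconnects F) ⊆
      univ.filter fun F => F.card = i ∧ G.Disconnects F :=
    monotone_filter_right _ fun _ _ => And.imp_right fun hdis hconn =>
      hdis (hb.connOn_bridgeShift (hb.ne_of_not_isBridge hf) hconn)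
  have hmem : univ \ T ∈ univ.filter fun F => F.card = i ∧ G.Disconnects F :=
    mem_filter.2 ⟨mem_univ _, hcompl, fun hconn => (mem_sdiff.1 (hTe
      (by simpa using hb.mem_of_connOn hconn))).2 (mem_singleton_self e)⟩
  have hnot : univ \ T ∉ univ.filter fun F => F.card = i ∧ (G.bridgeShift e f).Disconnects F :=
    fun h => (mem_filter.1 h).2.2 (by rwa [Finset.sdiff_sdiff_eq_self (subset_univ T)])
  exact card_lt_card ((ssubset_iff_of_subset hsub).2 ⟨univ \ T, hmem, hnot⟩)

lemma rel_lt_rel_bridgeShift (hc : G.Connected) (hb : G.IsBridge e) (hf : ¬ G.IsBridge f)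
    {p : ℝ} (hp0 : 0 < p) (hp1 : p < 1) : G.rel p < (G.bridgeShift e f).rel p := by
  have hweight : ∀ S : Finset G.E, 0 < p ^ S.card * (1 - p) ^ (G.nE - S.card) :=
    fun S => mul_pos (pow_pos hp0 _) (pow_pos (sub_pos.2 hp1) _)
  refine sum_lt_sum (fun S _ => ?_) ⟨univ \ {e}, mem_univ _, ?_⟩
  · by_cases hS : G.ConnOn S
    · rw [if_pos hS, if_pos (hb.connOn_bridgeShift (hb.ne_of_not_isBridge hf) hS)]
      rfl
    · rw [if_neg hS]
      split_ifs
      exacts [(hweight S).le, le_rfl]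
  · rw [if_neg hb, if_pos (hb.connOn_bridgeShift_compl hc hf)]
    exact hweight _

end IsBridge

end Multigraph

theorem bridged_graphs_not_optimal_general (n k : ℕ) :
    (∀ G : Multigraph, memG G n (n + k) → (∃ e : G.E, G.IsBridge e) →
      ∃ G' : Multigraph, memG G' n (n + k) ∧
        ∀ i : ℕ, 1 ≤ i → i ≤ k + 1 → G'.d i < G.d i) ∧
    (∀ p : ℝ, 0 < p → p < 1 →
      ∀ H : Multigraph, pOptimal H n (n + k) p → H.Bridgeless) := by
  refine ⟨fun G hG ⟨e, hb⟩ => ?_, fun p hp0 hp1 H hH e hb => ?_⟩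
  · have : Nonempty G.V := ⟨G.src e⟩
    obtain ⟨f, hf⟩ := hG.2.2.exists_not_isBridge (by rw [hG.1, hG.2.1]; omega)
    refine ⟨_, hb.memG_bridgeShift (hb.ne_of_not_isBridge hf) hG, fun i hi hik => ?_⟩
    exact hb.d_bridgeShift_lt hG.2.2 hf hi (by rw [hG.1, hG.2.1]; omega)
  · have : Nonempty H.V := ⟨H.src e⟩
    obtain ⟨f, hf⟩ := hH.1.2.2.exists_not_isBridge (by rw [hH.1.1, hH.1.2.1]; omega)
    exact (hb.rel_lt_rel_bridgeShift hH.1.2.2 hf hp0 hp1).not_ge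
      (hH.2 _ (hb.memG_bridgeShift (hb.ne_of_not_isBridge hf) hH.1))

/-- a connected (n, n+k)-graph with a bridge (n ≥ 2, k ≥ 0) is beaten on
every d_i, 1 ≤ i ≤ k+1, by some other member of 𝒢_{n,n+k}; hence every p-optimal
(n, n+k)-graph is bridgeless. -/
theorem bridged_graphs_not_optimal (n k : ℕ) (hn : 2 ≤ n) :
    (∀ G : Multigraph, memG G n (n + k) → (∃ e : G.E, G.IsBridge e) →
      ∃ G' : Multigraph, memG G' n (n + k) ∧
        ∀ i : ℕ, 1 ≤ i → i ≤ k + 1 → G'.d i < G.d i) ∧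
    (∀ p : ℝ, 0 < p → p < 1 →
      ∀ H : Multigraph, pOptimal H n (n + k) p → H.Bridgeless) :=
  bridged_graphs_not_optimal_general n k
end
end

section
/- Let H, G ∈ G_{n,m}. (a) If the edge-connectivity of H is strictly larger than that of G, then there exists p₀ ∈ (0,1) such that R(H,p) > R(G,p) for all p ∈ (p₀,1). (b) If the number of spanning trees of H is strictly larger than that of G, then there exists p₀ ∈ (0,1) such that R(H,p) > R(G,p) for all p ∈ (0,p₀). -/
/-! Grouping edge subsets by size, `R(G,p) = ∑ᵢ cᵢ pⁱ (1-p)^(m-i)` with `cᵢ` the number of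
connected spanning subgraphs with `i` edges, and, passing to complements,
`R(G,p) = 1 - ∑ᵢ dᵢ (1-p)ⁱ p^(m-i)`. Since `cᵢ = 0` for `i < n - 1` and `c_{n-1} = t(G)`,
while `dᵢ = 0` for `i < λ(G)` and `d_{λ(G)} > 0`, the difference `R(H,p) - R(G,p)` is
dominated near `p = 0` by `(t(H) - t(G)) p^(n-1)`, and near `p = 1` by
`d_{λ(G)}(G) (1-p)^λ(G)`. -/

open Classical Finset

noncomputable section

theorem sum_ite_pow_mul_eq_sum_range {R α : Type*} [CommSemiring R] [Fintype α]
    (P : Finset α → Prop) [DecidablePred P] (x y : R) :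
    ∑ S : Finset α, (if P S then x ^ S.card * y ^ (Fintype.card α - S.card) else 0) =
      ∑ i ∈ range (Fintype.card α + 1),
        ((univ.filter fun S : Finset α => S.card = i ∧ P S).card : R) *
          (x ^ i * y ^ (Fintype.card α - i)) := by
  rw [← sum_fiberwise_of_maps_to (g := Finset.card) (t := range (Fintype.card α + 1))
    fun S _ => mem_range.mpr (Nat.lt_succ_of_le (card_le_univ S))]
  refine sum_congr rfl fun i _ => ?_
  rw [← sum_filter, filter_filter, ← nsmul_eq_mul, ← sum_const]
  exact sum_congr rfl fun S hS => by rw [(mem_filter.mp hS).2.1]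

theorem exists_forall_sum_pos_of_lowest_pos {m t : ℕ} {e : ℕ → ℝ} (ht : t ≤ m)
    (hlow : ∀ i < t, e i = 0) (he : 0 < e t) :
    ∃ x₀ : ℝ, 0 < x₀ ∧ x₀ < 1 ∧ ∀ x : ℝ, 0 < x → x < x₀ →
      0 < ∑ i ∈ range (m + 1), e i * (x ^ i * (1 - x) ^ (m - i)) := by
  set g : ℝ → ℝ := fun x => ∑ i ∈ range (m + 1), e i * (x ^ (i - t) * (1 - x) ^ (m - i))
  have hg0 : g 0 = e t := by
    simp only [g]
    rw [sum_eq_single_of_mem t (mem_range.mpr (by omega))]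
    · simp
    · intro i _ hit
      rcases lt_or_gt_of_ne hit with h | h
      · simp [hlow i h]
      · simp [zero_pow (Nat.sub_ne_zero_of_lt h)]
  have hfactor :
      ∀ x, ∑ i ∈ range (m + 1), e i * (x ^ i * (1 - x) ^ (m - i)) = x ^ t * g x := by
    intro x
    rw [mul_sum]
    refine sum_congr rfl fun i _ => ?_
    rcases lt_or_ge i t with h | h
    · simp [hlow i h]
    · rw [← Nat.add_sub_cancel' h, pow_add, Nat.add_sub_cancel_left]
      ring
  have hg : ∀ᶠ x in nhds 0, 0 < g x :=
    ((by fun_prop : Continuous g).tendsto 0).eventually (lt_mem_nhds (hg0 ▸ he))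
  obtain ⟨ε, hε, hball⟩ := Metric.eventually_nhds_iff.mp hg
  refine ⟨min ε 1 / 2, by positivity, by linarith [min_le_right ε 1], fun x hx hxε => ?_⟩
  have hxball : dist x 0 < ε := by
    rw [Real.dist_eq, sub_zero, abs_of_pos hx]
    linarith [min_le_left ε 1]
  rw [hfactor]
  exact mul_pos (pow_pos hx t) (hball hxball)

namespace Multigraph

variable (G : Multigraph)

def connCount (i : ℕ) : ℕ :=
  ((univ : Finset (Finset G.E)).filter fun S => S.card = i ∧ G.ConnOn S).card

theorem rel_eq_sum_connCount (p : ℝ) :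
    G.rel p = ∑ i ∈ range (G.nE + 1), (G.connCount i : ℝ) * (p ^ i * (1 - p) ^ (G.nE - i)) :=
  sum_ite_pow_mul_eq_sum_range _ p (1 - p)

theorem rel_eq_one_sub_sum_d (p : ℝ) :
    G.rel p = 1 - ∑ i ∈ range (G.nE + 1), (G.d i : ℝ) * ((1 - p) ^ i * p ^ (G.nE - i)) := by
  have hcompl : G.rel p = ∑ F : Finset G.E,
      if G.Disconnects F then 0 else (1 - p) ^ F.card * p ^ (G.nE - F.card) := by
    refine sum_nbij' (univ \ ·) (univ \ ·) (by simp) (by simp) (by simp) (by simp) fun S _ => ?_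
    have hS : S.card ≤ G.nE := card_le_univ S
    rw [Disconnects, Finset.sdiff_sdiff_eq_self (subset_univ S), card_univ_sdiff, ← nE,
      Nat.sub_sub_self hS]
    split_ifs <;> first | rfl | ring
  have hbinom : ∑ F : Finset G.E, (1 - p) ^ F.card * p ^ (G.nE - F.card) = 1 := by
    rw [nE, Fintype.sum_pow_mul_eq_add_pow, sub_add_cancel, one_pow]
  calc G.rel p = ∑ F : Finset G.E, (1 - p) ^ F.card * p ^ (G.nE - F.card) -
        ∑ F : Finset G.E,
          (if G.Disconnects F then (1 - p) ^ F.card * p ^ (G.nE - F.card) else 0) := by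
        rw [hcompl, ← sum_sub_distrib]
        exact sum_congr rfl fun F _ => by split_ifs <;> ring
    _ = _ := by rw [hbinom]; exact congrArg (1 - ·) (sum_ite_pow_mul_eq_sum_range _ _ _)

theorem eq_of_connOn_empty (h : G.ConnOn ∅) (u v : G.V) : u = v := by
  induction h u v with
  | refl => rfl
  | tail _ hstep _ => obtain ⟨e, he, -⟩ := hstep; simp at he

theorem disconnects_univ (h : 1 < G.nV) : G.Disconnects univ := by
  intro hconn
  rw [sdiff_self] at hconn
  obtain ⟨u, v, huv⟩ := Fintype.exists_pair_of_one_lt_card h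
  exact huv (G.eq_of_connOn_empty hconn u v)

theorem edgeConnectivity_eq_zero_of_nV_le_one (h : G.nV ≤ 1) : G.edgeConnectivity = 0 := by
  rw [edgeConnectivity, Nat.sInf_eq_zero]
  refine Or.inr (Set.eq_empty_of_forall_notMem ?_)
  rintro i ⟨F, -, hF⟩
  exact hF fun u v => Fintype.card_le_one_iff.mp h u v ▸ .refl

theorem edgeConnectivity_le_card {F : Finset G.E} (hF : G.Disconnects F) :
    G.edgeConnectivity ≤ F.card :=
  Nat.sInf_le ⟨F, rfl, hF⟩

theorem exists_disconnects_card_eq_edgeConnectivity (h : 1 < G.nV) :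
    ∃ F : Finset G.E, F.card = G.edgeConnectivity ∧ G.Disconnects F :=
  Nat.sInf_mem (s := {i | ∃ F : Finset G.E, F.card = i ∧ G.Disconnects F})
    ⟨_, univ, rfl, G.disconnects_univ h⟩

theorem d_eq_zero_of_lt_edgeConnectivity {i : ℕ} (hi : i < G.edgeConnectivity) : G.d i = 0 := by
  rw [d, card_eq_zero, filter_eq_empty_iff]
  rintro F - ⟨rfl, hF⟩
  exact (G.edgeConnectivity_le_card hF).not_gt hi

theorem d_edgeConnectivity_pos (h : 1 < G.nV) : 0 < G.d G.edgeConnectivity := by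
  obtain ⟨F, hcard, hF⟩ := G.exists_disconnects_card_eq_edgeConnectivity h
  exact card_pos.mpr ⟨F, mem_filter.mpr ⟨mem_univ F, hcard, hF⟩⟩

theorem nV_le_card_add_one_of_connOn {S : Finset G.E} (h : G.ConnOn S) : G.nV ≤ S.card + 1 := by
  let T : SimpleGraph G.V := SimpleGraph.fromRel (G.stepOn S)
  rcases isEmpty_or_nonempty G.V with hV | hV
  · simp [nV, Fintype.card_eq_zero]
  have hT : T.Connected := by
    refine ⟨fun u v => ?_⟩
    induction h u v with
    | refl => rfl
    | @tail b c _ hstep ih =>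
      by_cases hbc : b = c
      · exact hbc ▸ ih
      · exact ih.trans (SimpleGraph.Adj.reachable (by simp [T, hbc, hstep]))
  have hedges : T.edgeSet ⊆ ↑(S.image fun e => s(G.src e, G.tgt e)) := by
    intro z hz
    induction z using Sym2.ind with | _ a b =>
    obtain ⟨-, ⟨e, he, hends⟩ | ⟨e, he, hends⟩⟩ := (SimpleGraph.mem_edgeSet T).mp hz
    all_goals
      refine mem_image.mpr ⟨e, he, ?_⟩
      rcases hends with ⟨rfl, rfl⟩ | ⟨rfl, rfl⟩ <;> simp [Sym2.eq_swap]
  calc G.nV ≤ Nat.card T.edgeSet + 1 := by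
        simpa [nV, Nat.card_eq_fintype_card] using hT.card_vert_le_card_edgeSet_add_one
    _ ≤ S.card + 1 := by
        rw [Nat.card_coe_set_eq]
        gcongr
        exact (Set.ncard_le_ncard hedges).trans ((Set.ncard_coe_finset _).trans_le card_image_le)

theorem nV_le_nE_add_one_of_connected (h : G.Connected) : G.nV ≤ G.nE + 1 :=
  G.nV_le_card_add_one_of_connOn h

theorem connCount_eq_zero_of_add_one_lt {i : ℕ} (hi : i + 1 < G.nV) : G.connCount i = 0 := by
  rw [connCount, card_eq_zero, filter_eq_empty_iff]
  rintro S - ⟨rfl, hS⟩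
  exact (G.nV_le_card_add_one_of_connOn hS).not_gt hi

theorem connCount_eq_treeCount (h : 0 < G.nV) : G.connCount (G.nV - 1) = G.treeCount := by
  unfold connCount treeCount
  congr 1
  exact filter_congr fun S _ => and_congr_left' ⟨fun _ => by omega, fun _ => by omega⟩

theorem nV_pos_of_treeCount_pos (h : 0 < G.treeCount) : 0 < G.nV := by
  obtain ⟨S, hS⟩ := card_pos.mp h
  have := (mem_filter.mp hS).2.1
  omega

end Multigraph

theorem exists_rel_lt_near_one_of_edgeConnectivity_lt {G H : Multigraph} (hV : H.nV = G.nV)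
    (hE : H.nE = G.nE) (hlt : G.edgeConnectivity < H.edgeConnectivity) :
    ∃ p₀ : ℝ, 0 < p₀ ∧ p₀ < 1 ∧
      ∀ p : ℝ, p₀ < p → p < 1 → G.rel p < H.rel p := by
  have hV₁ : 1 < G.nV := by
    by_contra! hle
    have := H.edgeConnectivity_eq_zero_of_nV_le_one (hV ▸ hle)
    omega
  have hHd {i : ℕ} (hi : i ≤ G.edgeConnectivity) : H.d i = 0 :=
    H.d_eq_zero_of_lt_edgeConnectivity (hi.trans_lt hlt)
  obtain ⟨x₀, hx₀, hx₀1, hpos⟩ := exists_forall_sum_pos_of_lowest_pos (m := G.nE)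
    (e := fun i => (G.d i : ℝ) - H.d i) (G.edgeConnectivity_le_card (G.disconnects_univ hV₁))
    (fun i hi => by simp [G.d_eq_zero_of_lt_edgeConnectivity hi, hHd hi.le])
    (by simpa [hHd le_rfl] using G.d_edgeConnectivity_pos hV₁)
  refine ⟨1 - x₀, by linarith, by linarith, fun p hp hp1 => ?_⟩
  have hsum := hpos (1 - p) (by linarith) (by linarith)
  simp only [sub_sub_cancel, sub_mul, sum_sub_distrib] at hsum
  rw [G.rel_eq_one_sub_sum_d, H.rel_eq_one_sub_sum_d, hE]
  linarith

theorem exists_rel_lt_near_zero_of_treeCount_lt {G H : Multigraph} (hG : G.Connected)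
    (hV : H.nV = G.nV) (hE : H.nE = G.nE) (hlt : G.treeCount < H.treeCount) :
    ∃ p₀ : ℝ, 0 < p₀ ∧ p₀ < 1 ∧
      ∀ p : ℝ, 0 < p → p < p₀ → G.rel p < H.rel p := by
  have hV₀ : 0 < G.nV := hV ▸ H.nV_pos_of_treeCount_pos (by omega)
  obtain ⟨x₀, hx₀, hx₀1, hpos⟩ := exists_forall_sum_pos_of_lowest_pos (m := G.nE)
    (e := fun i => (H.connCount i : ℝ) - G.connCount i) (t := G.nV - 1)
    (by have := G.nV_le_nE_add_one_of_connected hG; omega)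
    (fun i hi => by
      simp [G.connCount_eq_zero_of_add_one_lt (i := i) (by omega),
        H.connCount_eq_zero_of_add_one_lt (i := i) (by omega)])
    (by
      rw [G.connCount_eq_treeCount hV₀, ← hV, H.connCount_eq_treeCount (hV ▸ hV₀)]
      simpa using hlt)
  refine ⟨x₀, hx₀, hx₀1, fun p hp hp₀ => ?_⟩
  have hsum := hpos p hp hp₀
  simp only [sub_mul, sum_sub_distrib] at hsum
  rw [G.rel_eq_sum_connCount, H.rel_eq_sum_connCount, hE]
  linarith

/-- (a) larger edge-connectivity wins for p close to 1;
(b) more spanning trees wins for p close to 0. -/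
theorem reliability_near_extremes (n m : ℕ) (G H : Multigraph)
    (hG : memG G n m) (hH : memG H n m) :
    (G.edgeConnectivity < H.edgeConnectivity →
      ∃ p₀ : ℝ, 0 < p₀ ∧ p₀ < 1 ∧
        ∀ p : ℝ, p₀ < p → p < 1 → G.rel p < H.rel p) ∧
    (G.treeCount < H.treeCount →
      ∃ p₀ : ℝ, 0 < p₀ ∧ p₀ < 1 ∧
        ∀ p : ℝ, 0 < p → p < p₀ → G.rel p < H.rel p) := by
  obtain ⟨rfl, rfl, hGconn⟩ := hG
  obtain ⟨hV, hE, -⟩ := hH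
  exact ⟨exists_rel_lt_near_one_of_edgeConnectivity_lt hV hE,
    exists_rel_lt_near_zero_of_treeCount_lt hGconn hV hE⟩
end
end

section
/- Let D be a distillation whose edges are assigned nonnegative integer weights that yield a weak subdivision G of D (the weights being chain lengths, with no cycle of D having all weights zero). Then for every s ≠ 2, the number of s-bonds of G equals the sum, over all s-bonds of D, of the product of the weights of the edges of the bond. -/
open Classical Finset

noncomputable section

/-!
Two edges on the same chain of the weak subdivision form a 2-edge cut, cutting off the segment
of the chain between them. Hence a bond of size `s ≠ 2` meets every chain in at most one edge,
and projecting it to `D` gives an `s`-bond of `D`. Conversely an `s`-bond `B` of `D` lifts by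
choosing one edge on each chain of `B`, independently: the choices give `∏ e ∈ B, w e` distinct
bonds of the subdivision lying over `B` (none if some edge of `B` has weight zero).
-/

section GraphOn

variable {ι : Type*} {κ : ι → Type*}

def graphOn (B : Finset ι) (g : ∀ i ∈ B, κ i) : Finset (Σ i, κ i) :=
  B.attach.map ⟨fun i => ⟨i.1, g i.1 i.2⟩, fun _ _ h => Subtype.ext (congrArg Sigma.fst h)⟩

lemma mem_graphOn {B : Finset ι} {g : ∀ i ∈ B, κ i} {i : ι} {k : κ i} :
    ⟨i, k⟩ ∈ graphOn B g ↔ ∃ h : i ∈ B, g i h = k := by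
  refine ⟨fun hx => ?_, fun ⟨hi, hk⟩ => Finset.mem_map.2 ⟨⟨i, hi⟩, Finset.mem_attach _ _, hk ▸ rfl⟩⟩
  obtain ⟨⟨i', hi'⟩, -, hx⟩ := Finset.mem_map.1 hx
  obtain ⟨rfl, hk⟩ := Sigma.mk.inj_iff.1 hx
  exact ⟨hi', eq_of_heq hk⟩

lemma card_graphOn (B : Finset ι) (g : ∀ i ∈ B, κ i) : (graphOn B g).card = B.card := by
  simp [graphOn]

lemma image_fst_graphOn (B : Finset ι) (g : ∀ i ∈ B, κ i) :
    (graphOn B g).image Sigma.fst = B := by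
  ext i
  simp only [Finset.mem_image]
  constructor
  · rintro ⟨⟨i, k⟩, hx, rfl⟩
    exact (mem_graphOn.1 hx).1
  · exact fun hi => ⟨⟨i, g i hi⟩, mem_graphOn.2 ⟨hi, rfl⟩, rfl⟩

lemma injOn_fst_graphOn (B : Finset ι) (g : ∀ i ∈ B, κ i) :
    Set.InjOn Sigma.fst (graphOn B g : Set (Σ i, κ i)) := by
  rintro ⟨i, k⟩ hx ⟨i', k'⟩ hy (rfl : i = i')
  obtain ⟨-, rfl⟩ := mem_graphOn.1 hx
  obtain ⟨-, rfl⟩ := mem_graphOn.1 hy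
  rfl

lemma graphOn_injective (B : Finset ι) : Function.Injective (graphOn (κ := κ) B) := by
  intro g₁ g₂ h
  funext i hi
  have hmem : ⟨i, g₁ i hi⟩ ∈ graphOn B g₂ := h ▸ mem_graphOn.2 ⟨hi, rfl⟩
  exact (mem_graphOn.1 hmem).2.symm

lemma graphOn_mono {B₀ B : Finset ι} (h : B₀ ⊆ B) (g : ∀ i ∈ B, κ i) :
    graphOn B₀ (fun i hi => g i (h hi)) ⊆ graphOn B g := by
  rintro ⟨i, k⟩ hx
  obtain ⟨hi, rfl⟩ := mem_graphOn.1 hx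
  exact mem_graphOn.2 ⟨h hi, rfl⟩

lemma exists_graphOn_eq {F : Finset (Σ i, κ i)} (hF : Set.InjOn Sigma.fst (F : Set (Σ i, κ i))) :
    ∃ g, graphOn (F.image Sigma.fst) g = F := by
  have hfiber : ∀ i ∈ F.image Sigma.fst, ∃ k : κ i, ⟨i, k⟩ ∈ F := by
    intro i hi
    obtain ⟨⟨i, k⟩, hx, rfl⟩ := Finset.mem_image.1 hi
    exact ⟨k, hx⟩
  choose g hg using hfiber
  refine ⟨g, Finset.ext fun ⟨i, k⟩ => ⟨fun hx => ?_, fun hx => ?_⟩⟩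
  · obtain ⟨hi, rfl⟩ := mem_graphOn.1 hx
    exact hg i hi
  · have hi : i ∈ F.image Sigma.fst := Finset.mem_image_of_mem Sigma.fst hx
    refine mem_graphOn.2 ⟨hi, ?_⟩
    simpa using hF (hg i hi) hx rfl

end GraphOn

namespace Multigraph

def bondsOfCard (G : Multigraph) (s : ℕ) : Finset (Finset G.E) :=
  Finset.univ.filter fun F => F.card = s ∧ G.IsBond F

variable {G : Multigraph}

lemma mem_bondsOfCard {s : ℕ} {F : Finset G.E} : F ∈ G.bondsOfCard s ↔ F.card = s ∧ G.IsBond F := by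
  simp [bondsOfCard]

lemma mem_cutEdges {A : Finset G.V} {e : G.E} :
    e ∈ G.cutEdges A ↔ ¬ (G.src e ∈ A ↔ G.tgt e ∈ A) := by
  simp only [cutEdges, Finset.mem_filter, Finset.mem_univ, true_and]
  tauto

lemma isCut_cutEdges {A : Finset G.V} (h : (G.cutEdges A).Nonempty) : G.IsCut (G.cutEdges A) := by
  obtain ⟨e, he⟩ := h
  refine ⟨A, ?_, ?_, rfl⟩
  · by_contra hA
    rw [Finset.not_nonempty_iff_eq_empty] at hA
    simp [hA, mem_cutEdges] at he
  · rintro rfl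
    simp [mem_cutEdges] at he

lemma Connected.cutEdges_nonempty (hG : G.Connected) {A : Finset G.V} (hA : A.Nonempty)
    (hA' : A ≠ Finset.univ) : (G.cutEdges A).Nonempty := by
  obtain ⟨u, hu⟩ := hA
  obtain ⟨v, hv⟩ : ∃ v, v ∉ A := by simpa [Finset.eq_univ_iff_forall] using hA'
  by_contra hempty
  rw [Finset.not_nonempty_iff_eq_empty] at hempty
  have hclosed : ∀ x, Relation.ReflTransGen (G.stepOn Finset.univ) u x → x ∈ A := by
    intro x hx
    induction hx with
    | refl => exact hu
    | tail _ hstep ih =>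
      obtain ⟨e, -, he⟩ := hstep
      have hside : G.src e ∈ A ↔ G.tgt e ∈ A := by
        simpa [hempty] using (mem_cutEdges (A := A) (e := e)).not
      rcases he with ⟨rfl, rfl⟩ | ⟨rfl, rfl⟩ <;> tauto
  exact hv (hclosed v (hG u v))

end Multigraph

namespace MGIso

open Multigraph

variable {G H : Multigraph}

@[simps]
def symm (φ : MGIso G H) : MGIso H G where
  vMap := φ.vMap.symm
  eMap := φ.eMap.symm
  ends_eq e := by
    have h := φ.ends_eq (φ.eMap.symm e)
    rw [Equiv.apply_symm_apply] at h
    rcases h with ⟨h1, h2⟩ | ⟨h1, h2⟩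
    · exact Or.inl ⟨by simp [h1], by simp [h2]⟩
    · exact Or.inr ⟨by simp [h2], by simp [h1]⟩

lemma cutEdges_map (φ : MGIso G H) (A : Finset G.V) :
    H.cutEdges (A.map φ.vMap.toEmbedding) = (G.cutEdges A).map φ.eMap.toEmbedding := by
  ext e
  have h := φ.ends_eq (φ.eMap.symm e)
  rw [Equiv.apply_symm_apply] at h
  rw [Finset.mem_map_equiv, mem_cutEdges, mem_cutEdges]
  rcases h with ⟨h1, h2⟩ | ⟨h1, h2⟩
  · simp only [h1, h2, Finset.mem_map_equiv, Equiv.symm_apply_apply]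
  · simp only [h1, h2, Finset.mem_map_equiv, Equiv.symm_apply_apply]
    tauto

lemma isCut_map (φ : MGIso G H) {F : Finset G.E} (hF : G.IsCut F) :
    H.IsCut (F.map φ.eMap.toEmbedding) := by
  obtain ⟨A, hA, hA', rfl⟩ := hF
  refine ⟨A.map φ.vMap.toEmbedding, hA.map, ?_, (φ.cutEdges_map A).symm⟩
  rwa [Ne, ← Finset.map_univ_equiv φ.vMap, Finset.map_inj]

lemma isBond_map (φ : MGIso G H) {F : Finset G.E} (hF : G.IsBond F) :
    H.IsBond (F.map φ.eMap.toEmbedding) := by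
  refine ⟨φ.isCut_map hF.1, fun F' hsub hcut => ?_⟩
  have hpull : F'.map φ.symm.eMap.toEmbedding = F := by
    refine hF.2 _ ?_ (φ.symm.isCut_map hcut)
    rw [← Finset.map_subset_map (f := φ.eMap.toEmbedding)]
    simpa [Finset.map_map] using hsub
  rw [← hpull]
  simp [Finset.map_map]

lemma bondCount_eq (φ : MGIso G H) (s : ℕ) : G.bondCount s = H.bondCount s := by
  refine Finset.card_nbij' (·.map φ.eMap.toEmbedding) (·.map φ.symm.eMap.toEmbedding)
    ?_ ?_ ?_ ?_
  all_goals intro F hF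
  · simp only [Finset.coe_filter, Finset.mem_univ, true_and] at hF ⊢
    exact ⟨by simpa using hF.1, φ.isBond_map hF.2⟩
  · simp only [Finset.coe_filter, Finset.mem_univ, true_and] at hF ⊢
    exact ⟨by simpa using hF.1, φ.symm.isBond_map hF.2⟩
  all_goals simp [Finset.map_map]

end MGIso

namespace Subdivision

open Multigraph

-- Lets the edges of `subdivide D w` be written and destructured as pairs `⟨f, j⟩`.
attribute [reducible] subdivide

variable {D : Multigraph} {w : D.E → ℕ}

lemma chainNode_zero (f : D.E) : chainNode D w f 0 = Sum.inl (Quot.mk _ (D.src f)) := by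
  rw [chainNode, dif_neg (by omega), if_pos rfl]

lemma chainNode_of_le {f : D.E} {k : ℕ} (h : w f ≤ k) :
    chainNode D w f k = Sum.inl (Quot.mk _ (D.tgt f)) := by
  rcases Nat.eq_zero_or_pos k with rfl | hk
  · rw [chainNode_zero]
    exact congrArg Sum.inl (Quot.sound ⟨f, Nat.le_zero.1 h, rfl, rfl⟩)
  · rw [chainNode, dif_neg (by omega), if_neg (by omega)]

lemma chainNode_of_pos_of_lt {f : D.E} {k : ℕ} (h₀ : 0 < k) (h : k < w f) :
    chainNode D w f k = Sum.inr ⟨f, ⟨k - 1, by omega⟩⟩ := by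
  rw [chainNode, dif_pos ⟨h₀, h⟩]

lemma chainNode_eq_inr_iff {f f' : D.E} {k : ℕ} {i : Fin (w f' - 1)} :
    chainNode D w f k = Sum.inr ⟨f', i⟩ ↔ f = f' ∧ k = i + 1 := by
  rcases Nat.eq_zero_or_pos k with rfl | h₀
  · simp [chainNode_zero]
  rcases lt_or_ge k (w f) with h | h
  · rw [chainNode_of_pos_of_lt h₀ h, Sum.inr.injEq, Sigma.mk.inj_iff]
    constructor
    · rintro ⟨rfl, hi⟩
      exact ⟨rfl, by rw [← eq_of_heq hi]; dsimp only; omega⟩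
    · rintro ⟨rfl, rfl⟩
      exact ⟨rfl, heq_of_eq (Fin.ext (by simp))⟩
  · rw [chainNode_of_le h]
    simp only [reduceCtorEq, false_iff, not_and]
    rintro rfl
    have := i.isLt
    omega

lemma mem_cutEdges_subdivide {A : Finset (subdivide D w).V} {f : D.E} {j : Fin (w f)} :
    (⟨f, j⟩ : (subdivide D w).E) ∈ (subdivide D w).cutEdges A ↔
      ¬ (chainNode D w f j ∈ A ↔ chainNode D w f (j + 1) ∈ A) :=
  mem_cutEdges

lemma chainNode_mem_iff_of_forall_notMem {A : Finset (subdivide D w).V} {f : D.E} {a b : ℕ}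
    (hab : a ≤ b) (hb : b ≤ w f)
    (h : ∀ j : Fin (w f), a ≤ j → j < b → ⟨f, j⟩ ∉ (subdivide D w).cutEdges A) :
    chainNode D w f a ∈ A ↔ chainNode D w f b ∈ A := by
  induction b, hab using Nat.le_induction with
  | base => rfl
  | succ b hab ih =>
    have hstep := mem_cutEdges_subdivide.not.1 (h ⟨b, by omega⟩ hab b.lt_succ_self)
    exact (ih (by omega) fun j h₁ h₂ => h j h₁ (by omega)).trans (not_not.1 hstep)

lemma reflTransGen_chainNode (f : D.E) {k : ℕ} (hk : k ≤ w f) :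
    Relation.ReflTransGen ((subdivide D w).stepOn Finset.univ)
      (chainNode D w f 0) (chainNode D w f k) := by
  induction k with
  | zero => rfl
  | succ k ih =>
    exact (ih (by omega)).tail ⟨⟨f, ⟨k, by omega⟩⟩, Finset.mem_univ _, Or.inl ⟨rfl, rfl⟩⟩

lemma connected_subdivide (hD : D.Connected) : (subdivide D w).Connected := by
  let R := Relation.ReflTransGen ((subdivide D w).stepOn Finset.univ)
  have : Std.Symm ((subdivide D w).stepOn Finset.univ) := ⟨fun _ _ ⟨e, he, h⟩ => ⟨e, he, h.symm⟩⟩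
  have hsymm : ∀ {x y}, R x y → R y x := fun h => Relation.ReflTransGen.stdSymm.symm _ _ h
  have hends : ∀ e, R (Sum.inl (Quot.mk _ (D.src e))) (Sum.inl (Quot.mk _ (D.tgt e))) := by
    intro e
    have := reflTransGen_chainNode (w := w) e le_rfl
    rwa [chainNode_zero, chainNode_of_le le_rfl] at this
  have hbase : ∀ u v : D.V, R (Sum.inl (Quot.mk _ u)) (Sum.inl (Quot.mk _ v)) := by
    intro u v
    refine Relation.ReflTransGen.lift' (fun u => Sum.inl (Quot.mk _ u)) ?_ u v (hD u v)
    rintro _ _ ⟨e, -, ⟨rfl, rfl⟩ | ⟨rfl, rfl⟩⟩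
    exacts [hends e, hsymm (hends e)]
  have hroot : ∀ x, ∃ u : D.V, R (Sum.inl (Quot.mk _ u)) x := by
    rintro (q | ⟨f, i⟩)
    · obtain ⟨u, rfl⟩ := Quot.exists_rep q
      exact ⟨u, .refl⟩
    · refine ⟨D.src f, ?_⟩
      have := reflTransGen_chainNode (w := w) f (k := i + 1) (by omega)
      rwa [chainNode_zero, chainNode_of_pos_of_lt (by omega) (by omega)] at this
  intro x y
  obtain ⟨u, hu⟩ := hroot x
  obtain ⟨v, hv⟩ := hroot y
  exact (hsymm hu).trans ((hbase u v).trans hv)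

def baseSide (A : Finset (subdivide D w).V) : Finset D.V :=
  Finset.univ.filter fun u => Sum.inl (Quot.mk _ u) ∈ A

lemma mem_cutEdges_baseSide {A : Finset (subdivide D w).V} {f : D.E} :
    f ∈ D.cutEdges (baseSide A) ↔ ¬ (chainNode D w f 0 ∈ A ↔ chainNode D w f (w f) ∈ A) := by
  simp only [mem_cutEdges, baseSide, Finset.mem_filter, Finset.mem_univ, true_and,
    chainNode_zero, chainNode_of_le le_rfl]

lemma image_fst_cutEdges {A : Finset (subdivide D w).V}
    (hA : Set.InjOn Sigma.fst ((subdivide D w).cutEdges A : Set (subdivide D w).E)) :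
    ((subdivide D w).cutEdges A).image Sigma.fst = D.cutEdges (baseSide A) := by
  ext f
  rw [mem_cutEdges_baseSide, Finset.mem_image]
  constructor
  · rintro ⟨⟨f, j⟩, hj, rfl⟩
    have hother : ∀ j' : Fin (w f), j' ≠ j → ⟨f, j'⟩ ∉ (subdivide D w).cutEdges A :=
      fun j' hne hj' => hne (eq_of_heq (Sigma.mk.inj_iff.1 (hA hj' hj rfl)).2)
    have hbefore := chainNode_mem_iff_of_forall_notMem (Nat.zero_le j) j.isLt.le
      fun j' _ hlt => hother j' (Fin.ne_of_lt hlt)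
    have hafter := chainNode_mem_iff_of_forall_notMem (Nat.succ_le_of_lt j.isLt) le_rfl
      fun j' hle _ => hother j' (Fin.ne_of_gt hle)
    have := mem_cutEdges_subdivide.1 hj
    tauto
  · intro hf
    by_contra hno
    refine hf (chainNode_mem_iff_of_forall_notMem (Nat.zero_le _) le_rfl fun j _ _ hj => ?_)
    exact hno ⟨⟨f, j⟩, hj, rfl⟩

section Lift

variable {A₀ : Finset D.V}

lemma mem_eq_mem_of_zeroRel (g : ∀ e ∈ D.cutEdges A₀, Fin (w e)) {a b : D.V}
    (h : zeroRel D w a b) : (a ∈ A₀) = (b ∈ A₀) := by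
  obtain ⟨e, he, rfl, rfl⟩ := h
  refine propext (not_not.1 fun hcut => ?_)
  exact absurd (g e (mem_cutEdges.2 hcut)).isLt (by omega)

variable (g : ∀ e ∈ D.cutEdges A₀, Fin (w e))

-- The chain of `f` is cut after its first `cutPos g f` edges; the value `w f` for an uncut `f`
-- keeps the whole chain on the side of `D.src f`, which is also the side of `D.tgt f`.
def cutPos (f : D.E) : ℕ := if h : f ∈ D.cutEdges A₀ then g f h else w f

def liftSide : Finset (subdivide D w).V :=
  Finset.univ.filter fun
    | .inl q => Quot.lift (· ∈ A₀) (fun _ _ => mem_eq_mem_of_zeroRel g) q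
    | .inr ⟨f, i⟩ => if i.val < cutPos g f then D.src f ∈ A₀ else D.tgt f ∈ A₀

lemma baseSide_liftSide : baseSide (liftSide g) = A₀ := by
  ext u
  simp [baseSide, liftSide]

lemma chainNode_mem_liftSide {f : D.E} {k : ℕ} (hk : k ≤ w f) :
    chainNode D w f k ∈ liftSide g ↔ if k ≤ cutPos g f then D.src f ∈ A₀ else D.tgt f ∈ A₀ := by
  rcases Nat.eq_zero_or_pos k with rfl | h₀
  · simp [chainNode_zero, liftSide]
  rcases hk.lt_or_eq with hk | rfl
  · simp only [chainNode_of_pos_of_lt h₀ hk, liftSide, Finset.mem_filter, Finset.mem_univ,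
      true_and, show k - 1 < cutPos g f ↔ k ≤ cutPos g f by omega]
  · simp only [chainNode_of_le le_rfl, liftSide, Finset.mem_filter, Finset.mem_univ, true_and]
    by_cases hf : f ∈ D.cutEdges A₀
    · rw [if_neg (by simp [cutPos, hf])]
    · rw [if_pos (by simp [cutPos, hf])]
      exact (not_not.1 (mem_cutEdges.not.1 hf)).symm

lemma cutEdges_liftSide : (subdivide D w).cutEdges (liftSide g) = graphOn (D.cutEdges A₀) g := by
  ext ⟨f, j⟩
  rw [mem_cutEdges_subdivide, chainNode_mem_liftSide g j.isLt.le,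
    chainNode_mem_liftSide g j.isLt, mem_graphOn]
  by_cases hf : f ∈ D.cutEdges A₀
  · have hpos : cutPos g f = g f hf := dif_pos hf
    have hends := mem_cutEdges.1 hf
    rw [show (∃ h, g f h = j) ↔ g f hf = j from ⟨fun ⟨_, h⟩ => h, fun h => ⟨hf, h⟩⟩,
      Fin.ext_iff, hpos]
    split_ifs with h₁ h₂ h₂
    · simp only [iff_self, not_true_eq_false, false_iff]
      omega
    · exact iff_of_true hends (by omega)
    · omega
    · simp only [iff_self, not_true_eq_false, false_iff]
      omega
  · have hpos : cutPos g f = w f := dif_neg hf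
    simp only [hpos, hf, IsEmpty.exists_iff, iff_false, not_not]
    rw [if_pos (by omega), if_pos (by omega)]

end Lift

lemma isCut_pair {f : D.E} {j j' : Fin (w f)} (h : j < j') :
    (subdivide D w).IsCut {⟨f, j⟩, ⟨f, j'⟩} := by
  let A : Finset (subdivide D w).V := Finset.univ.filter fun x =>
    ∃ i : Fin (w f - 1), x = Sum.inr ⟨f, i⟩ ∧ j ≤ i.val ∧ i.val < j'
  have hnode : ∀ f' k, chainNode D w f' k ∈ A ↔ f' = f ∧ j < k ∧ k ≤ j' := by
    intro f' k
    simp only [A, Finset.mem_filter, Finset.mem_univ, true_and, chainNode_eq_inr_iff]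
    constructor
    · rintro ⟨i, ⟨rfl, rfl⟩, h₁, h₂⟩
      exact ⟨rfl, by omega, by omega⟩
    · rintro ⟨rfl, h₁, h₂⟩
      exact ⟨⟨k - 1, by omega⟩, ⟨rfl, by dsimp only; omega⟩, by dsimp only; omega,
        by dsimp only; omega⟩
  have hcut : (subdivide D w).cutEdges A = {⟨f, j⟩, ⟨f, j'⟩} := by
    ext ⟨f', k⟩
    rw [mem_cutEdges_subdivide, hnode, hnode, Finset.mem_insert, Finset.mem_singleton]
    by_cases hf : f' = f
    · subst hf
      simp only [Sigma.mk.inj_iff, heq_eq_eq, true_and, Fin.ext_iff]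
      omega
    · simp [hf]
  rw [← hcut]
  exact isCut_cutEdges (hcut ▸ Finset.insert_nonempty _ _)

lemma injOn_fst_of_isBond {F : Finset (subdivide D w).E} (hF : (subdivide D w).IsBond F)
    (hcard : F.card ≠ 2) : Set.InjOn Sigma.fst (F : Set (subdivide D w).E) := by
  rintro ⟨f, j⟩ hj ⟨f', j'⟩ hj' (rfl : f = f')
  have hpair : ∀ {a b : Fin (w f)}, ⟨f, a⟩ ∈ F → ⟨f, b⟩ ∈ F → ¬ a < b := by
    intro a b ha hb hab
    have hsub : {⟨f, a⟩, ⟨f, b⟩} ⊆ F := Finset.insert_subset ha (Finset.singleton_subset_iff.2 hb)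
    refine hcard ((hF.2 _ hsub (isCut_pair hab)) ▸ Finset.card_pair ?_)
    simp [hab.ne]
  rw [show j = j' from le_antisymm (not_lt.1 (hpair hj' hj)) (not_lt.1 (hpair hj hj'))]

lemma isCut_graphOn {B : Finset D.E} (hB : D.IsCut B) (g : ∀ e ∈ B, Fin (w e)) :
    (subdivide D w).IsCut (graphOn B g) := by
  obtain ⟨A₀, hne, hne', rfl⟩ := hB
  refine ⟨liftSide g, ?_, ?_, (cutEdges_liftSide g).symm⟩
  · obtain ⟨u, hu⟩ := hne
    rw [← baseSide_liftSide g] at hu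
    exact ⟨_, (Finset.mem_filter.1 hu).2⟩
  · intro huniv
    refine hne' (Finset.eq_univ_iff_forall.2 fun u => ?_)
    rw [← baseSide_liftSide g]
    simp [baseSide, huniv]

lemma isCut_image_fst (hD : D.Connected) {F : Finset (subdivide D w).E}
    (hF : (subdivide D w).IsCut F) (hinj : Set.InjOn Sigma.fst (F : Set (subdivide D w).E)) :
    D.IsCut (F.image Sigma.fst) := by
  obtain ⟨A, hne, hne', rfl⟩ := hF
  rw [image_fst_cutEdges hinj]
  refine isCut_cutEdges ?_
  rw [← image_fst_cutEdges hinj]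
  exact ((connected_subdivide hD).cutEdges_nonempty hne hne').image _

lemma isBond_graphOn (hD : D.Connected) {B : Finset D.E} (hB : D.IsBond B)
    (g : ∀ e ∈ B, Fin (w e)) : (subdivide D w).IsBond (graphOn B g) := by
  refine ⟨isCut_graphOn hB.1 g, fun F hsub hcut => ?_⟩
  have hinj := (injOn_fst_graphOn B g).mono (Finset.coe_subset.2 hsub)
  have hbase : F.image Sigma.fst = B := by
    refine hB.2 _ ?_ (isCut_image_fst hD hcut hinj)
    simpa only [image_fst_graphOn] using Finset.image_subset_image (f := Sigma.fst) hsub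
  refine Finset.eq_of_subset_of_card_le hsub ?_
  rw [card_graphOn, ← hbase, Finset.card_image_of_injOn hinj]

lemma isBond_image_fst (hD : D.Connected) {F : Finset (subdivide D w).E}
    (hF : (subdivide D w).IsBond F) (hinj : Set.InjOn Sigma.fst (F : Set (subdivide D w).E)) :
    D.IsBond (F.image Sigma.fst) := by
  refine ⟨isCut_image_fst hD hF.1 hinj, fun B hsub hcut => ?_⟩
  obtain ⟨g, hg⟩ := exists_graphOn_eq hinj
  have hlift := hF.2 _ (hg ▸ graphOn_mono hsub g) (isCut_graphOn hcut _)
  rw [← hlift, image_fst_graphOn]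

lemma mapsTo_image_fst_bondsOfCard (hD : D.Connected) {s : ℕ} (hs : s ≠ 2) :
    Set.MapsTo (Finset.image Sigma.fst)
      ((subdivide D w).bondsOfCard s : Set (Finset (subdivide D w).E))
      (D.bondsOfCard s : Set (Finset D.E)) := by
  intro F hF
  rw [Finset.mem_coe, mem_bondsOfCard] at hF ⊢
  have hinj := injOn_fst_of_isBond hF.2 (hF.1 ▸ hs)
  exact ⟨(Finset.card_image_of_injOn hinj).trans hF.1, isBond_image_fst hD hF.2 hinj⟩

lemma filter_bondsOfCard_image_fst_eq (hD : D.Connected) {s : ℕ} (hs : s ≠ 2) {B : Finset D.E}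
    (hB : B ∈ D.bondsOfCard s) :
    ((subdivide D w).bondsOfCard s).filter (fun F => F.image Sigma.fst = B) =
      (B.pi fun e => (Finset.univ : Finset (Fin (w e)))).image (graphOn B) := by
  rw [mem_bondsOfCard] at hB
  ext F
  rw [Finset.mem_filter, mem_bondsOfCard]
  simp only [Finset.mem_image, Finset.mem_pi, Finset.mem_univ, implies_true, true_and]
  constructor
  · rintro ⟨⟨hcard, hF⟩, rfl⟩
    exact exists_graphOn_eq (injOn_fst_of_isBond hF (hcard ▸ hs))
  · rintro ⟨g, rfl⟩
    exact ⟨⟨(card_graphOn B g).trans hB.1, isBond_graphOn hD hB.2 g⟩, image_fst_graphOn B g⟩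

end Subdivision

theorem bond_count_weak_subdivision_general (D : Multigraph) (hconn : D.Connected) (w : D.E → ℕ)
    (G : Multigraph) (hG : IsWeakSubdivision G D w) (s : ℕ) (hs : s ≠ 2) :
    G.bondCount s =
      ∑ B ∈ (Finset.univ : Finset (Finset D.E)).filter
          (fun B => B.card = s ∧ D.IsBond B),
        ∏ e ∈ B, w e := by
  obtain ⟨-, ⟨φ⟩⟩ := hG
  rw [φ.bondCount_eq]
  change ((subdivide D w).bondsOfCard s).card = ∑ B ∈ D.bondsOfCard s, ∏ e ∈ B, w e
  rw [Finset.card_eq_sum_card_fiberwise (Subdivision.mapsTo_image_fst_bondsOfCard hconn hs)]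
  refine Finset.sum_congr rfl fun B hB => ?_
  rw [Subdivision.filter_bondsOfCard_image_fst_eq hconn hs hB,
    Finset.card_image_of_injective _ (graphOn_injective B), Finset.card_pi]
  simp

/-- bond counting in a weak subdivision: for s ≠ 2, the number of
s-bonds of G equals the sum over the s-bonds of D of the products of the weights. -/
theorem bond_count_weak_subdivision (D : Multigraph) (hconn : D.Connected)
    (hdist : ∀ v : D.V, D.deg v ≠ 2) (w : D.E → ℕ) (hza : ZeroAcyclic D w)
    (G : Multigraph) (hG : IsWeakSubdivision G D w) (s : ℕ) (hs : s ≠ 2) :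
    G.bondCount s =
      ∑ B ∈ (Finset.univ : Finset (Finset D.E)).filter
          (fun B => B.card = s ∧ D.IsBond B),
        ∏ e ∈ B, w e :=
  bond_count_weak_subdivision_general D hconn w G hG s hs
end
end
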